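/- arXiv:1710.10167 — 2 statements merged into one kernel-verified Lean document; each statement's English description precedes it below -/
import Mathlib

section
/- Cone invariance differential inequality: suppose p, q: [0,T] → ℝ are nonnegative differentiable with p'(t) ≥ −λ_n η p(t) − L(p(t) + q(t)) and q'(t) ≤ −λ_{n+1} η q(t) + L(p(t) + q(t)), where η, L, γ > 0 and λ_{n+1} − λ_n > L(γ+1)²/(ηγ). Then at any time t with q(t) = γ p(t) > 0, (d/dt)(q − γp)(t) < 0. -/
/-- Cone invariance differential inequality: under the spectral gap condition
    λ_{n+1} − λ_n > L(γ+1)²/(ηγ), at any time where q(t) = γ p(t) > 0 one has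
    (d/dt)(q − γp)(t) < 0. -/
theorem cone_invariance_ineq (T η L γ lamn lamn1 : ℝ)
    (hη : 0 < η) (hL : 0 < L) (hγ : 0 < γ)
    (hgap : lamn1 - lamn > L * (γ + 1) ^ 2 / (η * γ))
    (p q p' q' : ℝ → ℝ)
    (hpd : ∀ t ∈ Set.Icc (0 : ℝ) T, HasDerivAt p (p' t) t)
    (hqd : ∀ t ∈ Set.Icc (0 : ℝ) T, HasDerivAt q (q' t) t)
    (hp0 : ∀ t ∈ Set.Icc (0 : ℝ) T, 0 ≤ p t)
    (hq0 : ∀ t ∈ Set.Icc (0 : ℝ) T, 0 ≤ q t)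
    (hp' : ∀ t ∈ Set.Icc (0 : ℝ) T, p' t ≥ -lamn * η * p t - L * (p t + q t))
    (hq' : ∀ t ∈ Set.Icc (0 : ℝ) T, q' t ≤ -lamn1 * η * q t + L * (p t + q t)) :
    ∀ t ∈ Set.Icc (0 : ℝ) T, q t = γ * p t → 0 < q t → q' t - γ * p' t < 0 := by
  intro t ht heq hqpos
  have hp'' := hp' t ht
  have hq'' := hq' t ht
  have hppos : 0 < p t := by
    rcases lt_or_ge 0 (p t) with h | h
    · exact h
    · nlinarith
  have hgap' : (lamn1 - lamn) * (η * γ) > L * (γ + 1) ^ 2 := by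
    have h0 : 0 < η * γ := mul_pos hη hγ
    calc L * (γ + 1) ^ 2 = L * (γ + 1) ^ 2 / (η * γ) * (η * γ) := by field_simp
    _ < (lamn1 - lamn) * (η * γ) := by exact mul_lt_mul_of_pos_right hgap h0
  rw [heq] at hq'' hp''
  nlinarith [mul_lt_mul_of_pos_right hgap' hppos, mul_le_mul_of_nonneg_left hp'' hγ.le]
end

section
/- Gradient–deconvolution commutation bound: for every mean-zero u on 𝕋², ‖∇ D_N u‖_{L²} ≤ ((N+1)^{1/2}/α) ‖A^{1/2} D_N^{1/2} u‖_{L²}, where A = I − α²Δ. -/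
/-- |k|² for k ∈ ℤ². -/
noncomputable def ksq (k : ℤ × ℤ) : ℝ := (k.1 : ℝ) ^ 2 + (k.2 : ℝ) ^ 2

/-- Van Cittert deconvolution symbol. -/
noncomputable def dN (α : ℝ) (N : ℕ) (k : ℤ × ℤ) : ℝ :=
  ∑ n ∈ Finset.range (N + 1), (α ^ 2 * ksq k / (1 + α ^ 2 * ksq k)) ^ n

lemma ksq_nonneg (k : ℤ × ℤ) : 0 ≤ ksq k := by
  unfold ksq; positivity

lemma dN_nonneg (α : ℝ) (N : ℕ) (k : ℤ × ℤ) (hα : 0 < α) : 0 ≤ dN α N k := by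
  unfold dN
  apply Finset.sum_nonneg
  intro n _
  have hs := ksq_nonneg k
  have h1 : (0:ℝ) < 1 + α ^ 2 * ksq k := by positivity
  exact pow_nonneg (div_nonneg (by positivity) h1.le) n

lemma dN_le (α : ℝ) (N : ℕ) (k : ℤ × ℤ) (hα : 0 < α) : dN α N k ≤ (N : ℝ) + 1 := by
  unfold dN
  have hs := ksq_nonneg k
  have h1 : (0:ℝ) < 1 + α ^ 2 * ksq k := by positivity
  have hr0 : 0 ≤ α ^ 2 * ksq k / (1 + α ^ 2 * ksq k) := by positivity
  have hr1 : α ^ 2 * ksq k / (1 + α ^ 2 * ksq k) ≤ 1 := by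
    rw [div_le_one h1]; linarith
  calc ∑ n ∈ Finset.range (N + 1), (α ^ 2 * ksq k / (1 + α ^ 2 * ksq k)) ^ n
      ≤ ∑ n ∈ Finset.range (N + 1), 1 := by
        apply Finset.sum_le_sum
        intro n _
        exact pow_le_one₀ hr0 hr1
    _ = (N : ℝ) + 1 := by simp

lemma key_ineq (α : ℝ) (hα : 0 < α) (N : ℕ) (k : ℤ × ℤ) (c : ℤ × ℤ → ℂ) :
    ksq k * (dN α N k) ^ 2 * ‖c k‖ ^ 2 ≤
      (((N : ℝ) + 1) / α ^ 2) * ((1 + α ^ 2 * ksq k) * dN α N k * ‖c k‖ ^ 2) := by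
  have hs := ksq_nonneg k
  have hd0 := dN_nonneg α N k hα
  have hdle := dN_le α N k hα
  have hnc : (0:ℝ) ≤ ‖c k‖ ^ 2 := by positivity
  have h1 : ksq k * (dN α N k) ^ 2 ≤ (((N : ℝ) + 1) / α ^ 2) * ((1 + α ^ 2 * ksq k) * dN α N k) := by
    rw [div_mul_eq_mul_div, le_div_iff₀ (by positivity)]
    have : ksq k * dN α N k ^ 2 * α ^ 2 = dN α N k * (α ^ 2 * ksq k * dN α N k) := by ring
    rw [this]
    have h2 : α ^ 2 * ksq k * dN α N k ≤ (1 + α ^ 2 * ksq k) * dN α N k := by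
      apply mul_le_mul_of_nonneg_right _ hd0; linarith
    calc dN α N k * (α ^ 2 * ksq k * dN α N k)
        ≤ ((N:ℝ) + 1) * (α ^ 2 * ksq k * dN α N k) := by
          apply mul_le_mul_of_nonneg_right hdle; positivity
      _ ≤ ((N:ℝ) + 1) * ((1 + α ^ 2 * ksq k) * dN α N k) := by
          apply mul_le_mul_of_nonneg_left h2; positivity
  calc ksq k * (dN α N k) ^ 2 * ‖c k‖ ^ 2
      ≤ ((((N : ℝ) + 1) / α ^ 2) * ((1 + α ^ 2 * ksq k) * dN α N k)) * ‖c k‖ ^ 2 :=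
        mul_le_mul_of_nonneg_right h1 hnc
    _ = (((N : ℝ) + 1) / α ^ 2) * ((1 + α ^ 2 * ksq k) * dN α N k * ‖c k‖ ^ 2) := by ring

/-- Gradient–deconvolution commutation bound, via Fourier coefficients of a
    mean-zero u on 𝕋²: ‖∇ D_N u‖ ≤ ((N+1)^{1/2}/α) ‖A^{1/2} D_N^{1/2} u‖. -/
theorem grad_deconvolution_bound (α : ℝ) (hα : 0 < α) (N : ℕ)
    (c : ℤ × ℤ → ℂ) (hc0 : c 0 = 0)
    (hsum : Summable fun k => (1 + α ^ 2 * ksq k) * dN α N k * ‖c k‖ ^ 2) :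
    Real.sqrt (∑' k : ℤ × ℤ, ksq k * (dN α N k) ^ 2 * ‖c k‖ ^ 2) ≤
      (Real.sqrt ((N : ℝ) + 1) / α) *
        Real.sqrt (∑' k : ℤ × ℤ, (1 + α ^ 2 * ksq k) * dN α N k * ‖c k‖ ^ 2) := by
  set C : ℝ := ((N : ℝ) + 1) / α ^ 2 with hC
  have hC0 : 0 ≤ C := by positivity
  have hle : ∀ k, ksq k * (dN α N k) ^ 2 * ‖c k‖ ^ 2 ≤
      C * ((1 + α ^ 2 * ksq k) * dN α N k * ‖c k‖ ^ 2) := fun k => key_ineq α hα N k c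
  have hnn : ∀ k, 0 ≤ ksq k * (dN α N k) ^ 2 * ‖c k‖ ^ 2 := by
    intro k
    have := ksq_nonneg k
    have := dN_nonneg α N k hα
    positivity
  have hsum2 : Summable fun k => C * ((1 + α ^ 2 * ksq k) * dN α N k * ‖c k‖ ^ 2) :=
    hsum.mul_left C
  have hsumA : Summable fun k => ksq k * (dN α N k) ^ 2 * ‖c k‖ ^ 2 :=
    Summable.of_nonneg_of_le hnn hle hsum2
  have htsum : (∑' k : ℤ × ℤ, ksq k * (dN α N k) ^ 2 * ‖c k‖ ^ 2) ≤
      C * ∑' k : ℤ × ℤ, (1 + α ^ 2 * ksq k) * dN α N k * ‖c k‖ ^ 2 := by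
    rw [← tsum_mul_left]
    exact Summable.tsum_le_tsum hle hsumA hsum2
  calc Real.sqrt (∑' k : ℤ × ℤ, ksq k * (dN α N k) ^ 2 * ‖c k‖ ^ 2)
      ≤ Real.sqrt (C * ∑' k : ℤ × ℤ, (1 + α ^ 2 * ksq k) * dN α N k * ‖c k‖ ^ 2) :=
        Real.sqrt_le_sqrt htsum
    _ = Real.sqrt C * Real.sqrt (∑' k : ℤ × ℤ, (1 + α ^ 2 * ksq k) * dN α N k * ‖c k‖ ^ 2) :=
        Real.sqrt_mul hC0 _
    _ = (Real.sqrt ((N : ℝ) + 1) / α) *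
        Real.sqrt (∑' k : ℤ × ℤ, (1 + α ^ 2 * ksq k) * dN α N k * ‖c k‖ ^ 2) := by
        congr 1
        rw [hC, Real.sqrt_div (by positivity : (0:ℝ) ≤ (N:ℝ)+1), Real.sqrt_sq hα.le]
end
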